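/- Let n ≥ 3 be odd and set d = (n+1)/2. If X is a full-rank subgroup of the weight lattice Λ of SL(n+1) containing ℤS^+, then there exist e, r, m ∈ ℕ with e | d, 0 ≤ r ≤ e−1 and m ≥ 1 such that X = ⟨σ_2, σ_3, …, σ_{n−1}, e·ω_{n−1}, r·ω_{n−1} + m·ω_n⟩_ℤ. -/

import Mathlib

/-!
Let `d = (n+1)/2` and let `π : Λ → ℤ²` send `ω_j ↦ (d − ⌈j/2⌉, j mod 2)`. Its kernel is
`⟨σ_2, …, σ_{n−1}⟩`, and `π(σ_1) = (d, 0)`, `π(ω_{n−1}) = (1, 0)`, `π(ω_n) = (0, 1)`.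
Since `X ⊇ ℤS⁺ ⊇ ker π`, `X` is the preimage of `π(X) ≤ ℤ²`, which contains `(d, 0)` and,
`X` having full rank, a vector off the first axis. The Hermite normal form of `π(X)` is
`⟨(e, 0), (r, m)⟩` with `e ∣ d`, `0 ≤ r < e`, `m ≥ 1`, and lifting these two generators
along `π` gives the stated generators of `X`.
-/

/-- The fundamental weights `ω_1, …, ω_n` of `SL(n+1)` in the weight lattice
`Λ = ℤⁿ`: `ω_j` is the `j`-th standard basis vector for `1 ≤ j ≤ n`, and by
convention `ω_0 = ω_{n+1} = 0`. -/
def w (n : ℕ) (j : ℕ) : Fin n → ℤ := fun i => if (i : ℕ) + 1 = j then 1 else 0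

/-- The simple roots of `SL(n+1)`: `α_i = 2ω_i − ω_{i−1} − ω_{i+1}` for `1 ≤ i ≤ n`. -/
def sroot (n : ℕ) (i : ℕ) : Fin n → ℤ := 2 • w n i - w n (i - 1) - w n (i + 1)

/-- `σ_i = α_i + α_{i+1}` for `1 ≤ i ≤ n−1`. -/
def sig (n : ℕ) (i : ℕ) : Fin n → ℤ := sroot n i + sroot n (i + 1)

/-- `ℤS⁺`, the subgroup of `Λ` generated by `σ_1, …, σ_{n−1}`. -/
def ZSplus (n : ℕ) : Submodule ℤ (Fin n → ℤ) :=
  Submodule.span ℤ (sig n '' Set.Icc 1 (n - 1))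

theorem Int.exists_nat_mem_iff_dvd (I : Ideal ℤ) : ∃ e : ℕ, ∀ x, x ∈ I ↔ (e : ℤ) ∣ x := by
  obtain ⟨a, rfl⟩ := Submodule.IsPrincipal.principal I
  exact ⟨a.natAbs, fun x => by rw [← Ideal.span, ← Int.span_natAbs, Ideal.mem_span_singleton]⟩

/-- Hermite normal form of a full-rank subgroup of `ℤ²`. -/
theorem Int.exists_eq_span_hermite (G : Submodule ℤ (ℤ × ℤ)) {d : ℤ} (hd : d ≠ 0)
    (hdG : (d, 0) ∈ G) (hG : ∃ g ∈ G, g.2 ≠ 0) :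
    ∃ e r m : ℕ, (e : ℤ) ∣ d ∧ r < e ∧ 0 < m ∧
      G = Submodule.span ℤ {((e : ℤ), 0), ((r : ℤ), (m : ℤ))} := by
  obtain ⟨e, he⟩ := Int.exists_nat_mem_iff_dvd (G.comap (LinearMap.inl ℤ ℤ ℤ))
  obtain ⟨m, hm⟩ := Int.exists_nat_mem_iff_dvd (G.map (LinearMap.snd ℤ ℤ ℤ))
  simp only [Submodule.mem_comap, LinearMap.inl_apply] at he
  simp only [Submodule.mem_map, LinearMap.snd_apply] at hm
  have hed : (e : ℤ) ∣ d := (he d).mp hdG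
  have he0 : (e : ℤ) ≠ 0 := fun h => hd (zero_dvd_iff.mp (h ▸ hed))
  have hm0 : m ≠ 0 := by
    rintro rfl
    obtain ⟨g, hg, hg2⟩ := hG
    exact hg2 (zero_dvd_iff.mp (by exact_mod_cast (hm g.2).mp ⟨g, hg, rfl⟩))
  obtain ⟨g, hg, hgm⟩ := (hm m).mpr dvd_rfl
  obtain ⟨r, hr⟩ := Int.eq_ofNat_of_zero_le (Int.emod_nonneg g.1 he0)
  have hre : (r : ℤ) < e := hr ▸ Int.emod_lt_of_pos g.1 (by omega)
  have hrm : ((r : ℤ), (m : ℤ)) ∈ G := by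
    convert G.sub_mem hg (G.smul_mem (g.1 / e) ((he e).mpr dvd_rfl)) using 1
    ext <;> simp [← hr, hgm, Int.emod_def, mul_comm]
  refine ⟨e, r, m, hed, by omega, Nat.pos_of_ne_zero hm0, le_antisymm ?_ ?_⟩
  · intro z hz
    obtain ⟨t, ht⟩ := (hm z.2).mp ⟨z, hz, rfl⟩
    obtain ⟨s, hs⟩ := (he (z.1 - t * r)).mp (by
      convert G.sub_mem hz (G.smul_mem t hrm) using 1
      ext <;> simp [ht, mul_comm])
    refine Submodule.mem_span_pair.mpr ⟨s, t, ?_⟩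
    ext
    · simp only [Prod.fst_add, Prod.smul_fst, smul_eq_mul]; linarith
    · simp [ht, mul_comm]
  · rw [Submodule.span_le, Set.insert_subset_iff, Set.singleton_subset_iff]
    exact ⟨(he e).mpr dvd_rfl, hrm⟩

theorem Submodule.exists_smul_mem_of_finrank_eq {R M : Type*} [CommRing R] [IsDomain R]
    [AddCommGroup M] [Module R M] [Module.Finite R M] (X : Submodule R M)
    (h : Module.finrank R X = Module.finrank R M) (v : M) : ∃ a : R, a ≠ 0 ∧ a • v ∈ X := by
  have hq : Module.finrank R (M ⧸ X) = 0 := by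
    have := X.finrank_quotient_add_finrank; omega
  obtain ⟨a, ha, hav⟩ := Module.finrank_eq_zero_iff.mp hq (Submodule.Quotient.mk v)
  exact ⟨a, ha, (Submodule.Quotient.mk_eq_zero X).mp hav⟩

theorem Submodule.eq_span_union_of_map_eq {R M N : Type*} [Ring R] [AddCommGroup M]
    [Module R M] [AddCommGroup N] [Module R N] (f : M →ₗ[R] N) {X : Submodule R M}
    {T S : Set M} (hT : span R T = LinearMap.ker f) (hX : LinearMap.ker f ≤ X)
    (hS : X.map f = span R (f '' S)) : X = span R (T ∪ S) := by
  rw [← comap_map_eq_self hX, hS, ← map_span, comap_map_eq, span_union, hT, sup_comm]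

theorem w_zero (n : ℕ) : w n 0 = 0 := by
  funext i; simp [w]

theorem w_of_lt {n j : ℕ} (h : n < j) : w n j = 0 := by
  funext i; simp only [w, Pi.zero_apply, ite_eq_right_iff]; omega

theorem w_succ (n : ℕ) (i : Fin n) : w n (i + 1) = Pi.single i 1 := by
  funext k; simp [w, Pi.single_apply, Fin.ext_iff]

theorem sig_eq (n j : ℕ) : sig n j = w n j + w n (j + 1) - w n (j - 1) - w n (j + 2) := by
  simp only [sig, sroot, Nat.add_sub_cancel]; abel

def sigSpan (n : ℕ) : Submodule ℤ (Fin n → ℤ) := Submodule.span ℤ (sig n '' Set.Icc 2 (n - 1))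

theorem sigSpan_sup_span_eq_top {n : ℕ} (hn : 3 ≤ n) :
    sigSpan n ⊔ Submodule.span ℤ {w n (n - 1), w n n} = ⊤ := by
  set U := sigSpan n ⊔ Submodule.span ℤ {w n (n - 1), w n n}
  -- `σ_{k+1}` expresses `ω_k` through `ω_{k+1}, ω_{k+2}, ω_{k+3}`: descend from `ω_n, ω_{n+1} = 0`.
  have key : ∀ k ≤ n - 1, w n k ∈ U ∧ w n (k + 1) ∈ U ∧ w n (k + 2) ∈ U := by
    intro k hk
    induction hk using Nat.decreasingInduction with
    | self =>
      refine ⟨Submodule.mem_sup_right (Submodule.subset_span (by simp)),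
        Submodule.mem_sup_right (Submodule.subset_span ?_), ?_⟩
      · simp [show n - 1 + 1 = n by omega]
      · rw [w_of_lt (by omega)]; exact U.zero_mem
    | of_succ k hk ih =>
      refine ⟨?_, ih.1, ih.2.1⟩
      rcases k.eq_zero_or_pos with rfl | hk0
      · rw [w_zero]; exact U.zero_mem
      have hσ : sig n (k + 1) ∈ U :=
        Submodule.mem_sup_left (Submodule.subset_span ⟨k + 1, ⟨by omega, by omega⟩, rfl⟩)
      have hw : w n k = w n (k + 1) + w n (k + 2) - w n (k + 3) - sig n (k + 1) := by
        rw [sig_eq]; simp only [Nat.add_sub_cancel]; abel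
      rw [hw]
      exact U.sub_mem (U.sub_mem (U.add_mem ih.1 ih.2.1) ih.2.2) hσ
  rw [eq_top_iff, ← (Pi.basisFun ℤ (Fin n)).span_eq, Submodule.span_le]
  rintro _ ⟨i, rfl⟩
  rw [Pi.basisFun_apply, ← w_succ]
  exact (key i (by omega)).2.1

/-- `π(ω_j) = (d − ⌈j/2⌉, j mod 2)`, `d = (n+1)/2`, solves `π(σ_j) = 0` for `2 ≤ j ≤ n − 1`
with `π(ω_{n−1}) = (1, 0)`, `π(ω_n) = (0, 1)` and `π(ω_{n+1}) = 0`. -/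
def weightCoord (n j : ℕ) : ℤ × ℤ := ((n + 1 : ℤ) / 2 - (j + 1 : ℤ) / 2, (j : ℤ) % 2)

/-- The quotient map `Λ → Λ ⧸ ⟨σ_2, …, σ_{n−1}⟩_ℤ ≅ ℤ²` (see `sigSpan_eq_ker_proj`). -/
def proj (n : ℕ) : (Fin n → ℤ) →ₗ[ℤ] ℤ × ℤ :=
  Fintype.linearCombination ℤ fun i : Fin n => weightCoord n (i + 1)

theorem proj_w {n j : ℕ} (hno : Odd n) (h1 : 1 ≤ j) (h2 : j ≤ n + 1) :
    proj n (w n j) = weightCoord n j := by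
  obtain h | rfl := Nat.lt_or_eq_of_le h2
  · obtain ⟨i, rfl⟩ : ∃ i : Fin n, (i : ℕ) + 1 = j := ⟨⟨j - 1, by omega⟩, by simp; omega⟩
    simp [proj, w_succ]
  · obtain ⟨k, rfl⟩ := hno
    rw [w_of_lt (by omega), map_zero]
    simp [weightCoord, Prod.ext_iff]; omega

theorem proj_sig {n j : ℕ} (hno : Odd n) (h1 : 2 ≤ j) (h2 : j ≤ n - 1) :
    proj n (sig n j) = 0 := by
  rw [sig_eq]
  simp only [map_add, map_sub, proj_w hno (by omega : 1 ≤ j) (by omega),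
    proj_w hno (by omega : 1 ≤ j + 1) (by omega), proj_w hno (by omega : 1 ≤ j - 1) (by omega),
    proj_w hno (by omega : 1 ≤ j + 2) (by omega)]
  simp [weightCoord, Prod.ext_iff]; omega

theorem proj_sig_one {n : ℕ} (hn : 3 ≤ n) (hno : Odd n) :
    proj n (sig n 1) = ((((n + 1) / 2 : ℕ) : ℤ), 0) := by
  rw [sig_eq]
  simp only [Nat.sub_self, w_zero, map_add, map_sub, map_zero, proj_w hno le_rfl (by omega),
    proj_w hno (by omega : 1 ≤ 2) (by omega), proj_w hno (by omega : 1 ≤ 3) (by omega)]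
  simp [weightCoord, Prod.ext_iff]; omega

theorem proj_w_pred {n : ℕ} (hn : 3 ≤ n) (hno : Odd n) : proj n (w n (n - 1)) = (1, 0) := by
  rw [proj_w hno (by omega) (by omega)]
  obtain ⟨k, rfl⟩ := hno
  simp [weightCoord, Prod.ext_iff]; omega

theorem proj_w_self {n : ℕ} (hn : 3 ≤ n) (hno : Odd n) : proj n (w n n) = (0, 1) := by
  rw [proj_w hno (by omega) (by omega)]
  obtain ⟨k, rfl⟩ := hno
  simp [weightCoord]

theorem proj_smul_w_pred_add_smul_w_self {n : ℕ} (hn : 3 ≤ n) (hno : Odd n) (p q : ℤ) :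
    proj n (p • w n (n - 1) + q • w n n) = (p, q) := by
  simp only [map_add, map_smul, proj_w_pred hn hno, proj_w_self hn hno, Prod.smul_mk, smul_eq_mul,
    mul_one, mul_zero, Prod.mk_add_mk, add_zero, zero_add]

theorem sigSpan_eq_ker_proj {n : ℕ} (hn : 3 ≤ n) (hno : Odd n) :
    sigSpan n = LinearMap.ker (proj n) := by
  refine eq_of_le_of_inf_le_of_le_sup (z := Submodule.span ℤ {w n (n - 1), w n n}) ?_ ?_ ?_
  · rw [sigSpan, Submodule.span_le]
    rintro _ ⟨j, ⟨hj1, hj2⟩, rfl⟩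
    exact proj_sig hno hj1 hj2
  · rintro x ⟨hx, hxW⟩
    obtain ⟨p, q, rfl⟩ := Submodule.mem_span_pair.mp hxW
    rw [SetLike.mem_coe, LinearMap.mem_ker, proj_smul_w_pred_add_smul_w_self hn hno] at hx
    obtain ⟨rfl, rfl⟩ := Prod.mk_eq_zero.mp hx
    simp only [zero_smul, add_zero, Submodule.zero_mem]
  · rw [sigSpan_sup_span_eq_top hn]; exact le_top

/-- For `n ≥ 3` odd and `d = (n+1)/2`: if `X` is a full-rank subgroup of the weight
lattice `Λ` of `SL(n+1)` containing `ℤS⁺`, then there exist `e, r, m ∈ ℕ` with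
`e ∣ d`, `0 ≤ r ≤ e−1` and `m ≥ 1` such that
`X = ⟨σ_2, σ_3, …, σ_{n−1}, e·ω_{n−1}, r·ω_{n−1} + m·ω_n⟩_ℤ`. -/
theorem stmt13 (n : ℕ) (hn : 3 ≤ n) (hno : Odd n) (X : Submodule ℤ (Fin n → ℤ))
    (hrank : Module.finrank ℤ X = n) (hZS : ZSplus n ≤ X) :
    ∃ e r m : ℕ, e ∣ (n + 1) / 2 ∧ r ≤ e - 1 ∧ 1 ≤ m ∧
      X = Submodule.span ℤ (sig n '' Set.Icc 2 (n - 1) ∪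
        {(e : ℤ) • w n (n - 1), (r : ℤ) • w n (n - 1) + (m : ℤ) • w n n}) := by
  have hker := sigSpan_eq_ker_proj hn hno
  have hσ₁ : proj n (sig n 1) ∈ X.map (proj n) :=
    Submodule.mem_map_of_mem (hZS (Submodule.subset_span ⟨1, ⟨le_rfl, by omega⟩, rfl⟩))
  have hωn : ∃ g ∈ X.map (proj n), g.2 ≠ 0 := by
    obtain ⟨a, ha, haX⟩ := X.exists_smul_mem_of_finrank_eq (by simpa using hrank) (w n n)
    refine ⟨_, Submodule.mem_map_of_mem haX, ?_⟩
    rw [map_smul, proj_w_self hn hno]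
    simpa using ha
  rw [proj_sig_one hn hno] at hσ₁
  obtain ⟨e, r, m, hed, hre, hm, hG⟩ :=
    Int.exists_eq_span_hermite _ (by omega) hσ₁ hωn
  refine ⟨e, r, m, Int.natCast_dvd_natCast.mp hed, by omega, hm,
    Submodule.eq_span_union_of_map_eq (proj n) hker ?_ ?_⟩
  · rw [← hker]
    exact (Submodule.span_mono (Set.image_mono (Set.Icc_subset_Icc_left one_le_two))).trans hZS
  · rw [hG, Set.image_pair, map_smul, proj_w_pred hn hno, proj_smul_w_pred_add_smul_w_self hn hno]
    simp
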